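/- For any real α ≥ 2 and integers 1 ≤ j' ≤ k with j = j' - 1, and any x ≥ jα, ∏_{i=j'}^k σ(x - iα) ≥ (1/5)·exp(-(α/2)·(k-j+1)(k-j)), where σ is the logistic sigmoid. -/

import Mathlib

/-!
Each factor is at least `σ(-mα)` with `m = i - j ≥ 1`, and `σ(-s) ≥ e^{-s} e^{-e^{-s}}` because
`1 + y ≤ e^y`. The numerators multiply to `exp (-(α/2)(k-j+1)(k-j))`, while the correction terms
multiply to `exp (-∑ e^{-mα}) ≥ e^{-1} > 1/5`, since `e^{-α} ≤ 1/2`.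
-/

open Real Finset

lemma exp_div_one_add_exp (t : ℝ) : exp t / (1 + exp t) = sigmoid t := by
  rw [sigmoid_def, exp_neg]
  field_simp
  ring

lemma exp_mul_exp_neg_exp_le_sigmoid (t : ℝ) : exp t * exp (-exp t) ≤ sigmoid t := by
  rw [← exp_div_one_add_exp, exp_neg, ← div_eq_mul_inv]
  gcongr
  linarith [add_one_le_exp (exp t)]

lemma sum_range_cast_add_one (N : ℕ) : ∑ m ∈ range N, ((m : ℝ) + 1) = (N + 1) * N / 2 := by
  induction N with
  | zero => simp
  | succ N ih => rw [sum_range_succ, ih]; push_cast; ring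

lemma sum_range_exp_neg_le_one {α : ℝ} (hα : 2 ≤ α) (N : ℕ) :
    ∑ m ∈ range N, exp (-((m + 1) * α)) ≤ 1 := by
  have hexp : exp (-α) ≤ 1 / 2 := by
    rw [exp_neg, ← one_div]
    gcongr
    linarith [add_one_le_exp α]
  calc ∑ m ∈ range N, exp (-((m + 1) * α))
      ≤ ∑ m ∈ range N, (1 / 2 : ℝ) ^ m * (1 / 2) := by
        gcongr with m
        rw [← pow_succ, show -((m + 1) * α) = ((m + 1 : ℕ) : ℝ) * -α by push_cast; ring,
          exp_nat_mul]
        gcongr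
    _ = (∑ m ∈ range N, (1 / 2 : ℝ) ^ m) * (1 / 2) := (sum_mul ..).symm
    _ ≤ 1 := by linarith [sum_geometric_two_le N]

lemma exp_neg_one_mul_exp_le_prod_sigmoid {α : ℝ} (hα : 2 ≤ α) {t : ℕ → ℝ}
    (ht : ∀ m, -((m + 1) * α) ≤ t m) (N : ℕ) :
    exp (-1) * exp (-(α / 2) * (N + 1) * N) ≤ ∏ m ∈ range N, sigmoid (t m) := by
  set s : ℕ → ℝ := fun m => -((m + 1) * α)
  calc exp (-1) * exp (-(α / 2) * (N + 1) * N)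
      ≤ exp (-∑ m ∈ range N, exp (s m)) * exp (∑ m ∈ range N, s m) := by
        gcongr
        · exact sum_range_exp_neg_le_one hα N
        · simp only [s, sum_neg_distrib, ← sum_mul, sum_range_cast_add_one]; linarith
    _ = ∏ m ∈ range N, exp (s m) * exp (-exp (s m)) := by
        rw [prod_mul_distrib, ← exp_sum, ← exp_sum, ← sum_neg_distrib, mul_comm]
    _ ≤ ∏ m ∈ range N, sigmoid (t m) := by
        gcongr with m
        exact (exp_mul_exp_neg_exp_le_sigmoid _).trans (sigmoid_le (ht m))

theorem stmt_10_general (x α : ℝ) (k j' : ℕ) (hα : 2 ≤ α) (hj' : j' ≤ k)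
    (hx : ((j' : ℝ) - 1) * α ≤ x) :
    (1 / 5) * Real.exp (-(α / 2) * (((k : ℝ) - ((j' : ℝ) - 1)) + 1) * ((k : ℝ) - ((j' : ℝ) - 1)))
      ≤ ∏ i ∈ Finset.Icc j' k, Real.exp (x - i * α) / (1 + Real.exp (x - i * α)) := by
  obtain ⟨n, rfl⟩ : ∃ n, k = j' + n := ⟨k - j', by omega⟩
  have hlen : ((j' + n : ℕ) : ℝ) - ((j' : ℝ) - 1) = ((n + 1 : ℕ) : ℝ) := by push_cast; ring
  have hfifth : (1 / 5 : ℝ) ≤ exp (-1) := by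
    rw [exp_neg, ← one_div]
    gcongr
    linarith [exp_one_lt_d9]
  rw [hlen, ← Ico_add_one_right_eq_Icc, prod_Ico_eq_prod_range,
    show j' + n + 1 - j' = n + 1 by omega]
  simp only [exp_div_one_add_exp]
  grw [hfifth]
  refine exp_neg_one_mul_exp_le_prod_sigmoid hα (fun m => ?_) (n + 1)
  push_cast
  linarith

theorem stmt_10 (x α : ℝ) (k j' : ℕ) (hα : 2 ≤ α) (hj'1 : 1 ≤ j') (hj' : j' ≤ k)
    (hx : ((j' : ℝ) - 1) * α ≤ x) :
    (1 / 5) * Real.exp (-(α / 2) * (((k : ℝ) - ((j' : ℝ) - 1)) + 1) * ((k : ℝ) - ((j' : ℝ) - 1)))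
      ≤ ∏ i ∈ Finset.Icc j' k, Real.exp (x - i * α) / (1 + Real.exp (x - i * α)) :=
  stmt_10_general x α k j' hα hj' hx
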